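/- arXiv:2506.10438 — 2 statements merged into one kernel-verified Lean document; each statement's English description precedes it below -/
import Mathlib

section
/- Let K be a compact subset of (0, ∞). Then for every ε > 0, lim_{n → ∞} sup_{α ∈ K} sup_{x ∈ [0,1]} P(|S_{α,x}^{(n)}/n − x| ≥ ε) = 0, where S_{α,x}^{(n)} is a random variable with law μ_{α,x}^{(n)}. -/
open MeasureTheory Filter

/-- Generalized binomial coefficient `Γ(w+1)/(Γ(z+1)Γ(w−z+1))`; since `Real.Gamma`
vanishes at its poles, this is `0` (by division by zero) when a pole appears in
the denominator. -/
noncomputable def gbinom (w z : ℝ) : ℝ :=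
  Real.Gamma (w + 1) / (Real.Gamma (z + 1) * Real.Gamma (w - z + 1))

/-- The normalizing constant `Z_{α,x}^{(n)}`. -/
noncomputable def fracZ (α x : ℝ) (n : ℕ) : ℝ :=
  α * ∑ j ∈ Finset.range (n + 1),
    gbinom (α * n) (α * j) * x ^ (α * (j : ℝ)) * (1 - x) ^ (α * ((n : ℝ) - (j : ℝ)))

/-- The mass of `{j}` under the fractional binomial distribution `μ_{α,x}^{(n)}`. -/
noncomputable def fracW (α x : ℝ) (n j : ℕ) : ℝ :=
  (α / fracZ α x n) * gbinom (α * n) (α * j) * x ^ (α * (j : ℝ))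
    * (1 - x) ^ (α * ((n : ℝ) - (j : ℝ)))

/-!
Write `t_j = binom(αn, αj) x^{αj} (1-x)^{α(n-j)}` for the unnormalised weights. Log-convexity
of `Γ` bounds `t_{k+1} / t_k` by `(x (α(n-k)+1) / ((1-x) α k))^α`, which is at most `(1-δ)^α`
once `k ≥ n(x+δ)` and `αnδ ≥ 2`. So every `t_j` with `j ≥ n(x+ε)` is at most
`((1-ε/2)^{α₀ε/4})^n` times `t_p`, `p = ⌈n(x+ε/2)⌉`, where `α₀ = min K`; as `t_p` is a summand
of the normaliser, the probability of `j` obeys the same bound, and `n+1` such bounds still tend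
to `0`. The lower tail is the upper tail of the reflected distribution `j ↦ n-j`, `x ↦ 1-x`.
-/

open Real Finset

namespace Real

lemma log_Gamma_add_le {a b : ℝ} (hb : 0 < b) (ha : 0 < a) :
    log (Gamma (b + a)) ≤ log (Gamma b) + a * log (b + a) := by
  have hba : 0 < b + a := by linarith
  have hslope := convexOn_log_Gamma.slope_mono_adjacent (x := b) (y := b + a) (z := b + a + 1)
    hb (by simp; linarith) (by linarith) (by linarith)
  have hstep : log (Gamma (b + a + 1)) = log (b + a) + log (Gamma (b + a)) := by
    rw [Gamma_add_one hba.ne', log_mul hba.ne' (Gamma_pos_of_pos hba).ne']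
  simp only [Function.comp_apply, hstep, add_sub_cancel_left, add_sub_cancel_right, div_one]
    at hslope
  linarith [(div_le_iff₀ ha).1 hslope]

lemma log_Gamma_add_one_add_ge {y c : ℝ} (hy : 0 < y) (hc : 0 < c) :
    log (Gamma (y + 1)) + c * log y ≤ log (Gamma (y + 1 + c)) := by
  have hslope := convexOn_log_Gamma.slope_mono_adjacent (x := y) (y := y + 1) (z := y + 1 + c)
    hy (by simp; linarith) (by linarith) (by linarith)
  have hstep : log (Gamma (y + 1)) = log y + log (Gamma y) := by
    rw [Gamma_add_one hy.ne', log_mul hy.ne' (Gamma_pos_of_pos hy).ne']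
  simp only [Function.comp_apply, hstep, add_sub_cancel_left, add_sub_cancel_right, div_one]
    at hslope
  linarith [(le_div_iff₀ hc).1 hslope]

end Real

lemma gbinom_pos {w z : ℝ} (hz : 0 ≤ z) (hzw : z ≤ w) : 0 < gbinom w z :=
  div_pos (Gamma_pos_of_pos (by linarith))
    (mul_pos (Gamma_pos_of_pos (by linarith)) (Gamma_pos_of_pos (by linarith)))

noncomputable def fracBinomTerm (α x : ℝ) (n j : ℕ) : ℝ :=
  gbinom (α * n) (α * j) * x ^ (α * (j : ℝ)) * (1 - x) ^ (α * ((n : ℝ) - (j : ℝ)))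

section FracBinomTerm

variable {α x : ℝ} {n j : ℕ}

lemma gbinom_mul_pos (hα : 0 < α) (hj : j ≤ n) : 0 < gbinom (α * n) (α * j) :=
  gbinom_pos (by positivity) (mul_le_mul_of_nonneg_left (Nat.cast_le.2 hj) hα.le)

lemma fracW_eq_div (hα : α ≠ 0) :
    fracW α x n j = fracBinomTerm α x n j / ∑ i ∈ range (n + 1), fracBinomTerm α x n i := by
  simp only [fracW, fracZ, fracBinomTerm, div_mul_cancel_left₀ hα]
  ring

lemma fracBinomTerm_nonneg (hα : 0 < α) (hx0 : 0 ≤ x) (hx1 : x ≤ 1) (hj : j ≤ n) :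
    0 ≤ fracBinomTerm α x n j := by
  have := gbinom_mul_pos hα hj
  have : 0 ≤ 1 - x := by linarith
  unfold fracBinomTerm
  positivity

lemma fracBinomTerm_pos (hα : 0 < α) (hx0 : 0 < x) (hx1 : x < 1) (hj : j ≤ n) :
    0 < fracBinomTerm α x n j := by
  have := gbinom_mul_pos hα hj
  have : 0 < 1 - x := by linarith
  unfold fracBinomTerm
  positivity

lemma fracW_nonneg (hα : 0 < α) (hx0 : 0 ≤ x) (hx1 : x ≤ 1) (hj : j ≤ n) :
    0 ≤ fracW α x n j := by
  rw [fracW_eq_div hα.ne']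
  exact div_nonneg (fracBinomTerm_nonneg hα hx0 hx1 hj)
    (sum_nonneg fun i hi => fracBinomTerm_nonneg hα hx0 hx1 (mem_range_succ_iff.1 hi))

lemma fracBinomTerm_reflect (α x : ℝ) (hj : j ≤ n) :
    fracBinomTerm α (1 - x) n (n - j) = fracBinomTerm α x n j := by
  simp only [fracBinomTerm, gbinom, Nat.cast_sub hj, sub_sub_cancel]
  rw [show α * n - α * (n - j) = α * j by ring, show α * n - α * j = α * (n - j) by ring]
  ring

lemma fracW_reflect (α x : ℝ) (hj : j ≤ n) : fracW α (1 - x) n (n - j) = fracW α x n j := by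
  rcases eq_or_ne α 0 with rfl | hα
  · simp [fracW]
  have hsum : ∑ i ∈ range (n + 1), fracBinomTerm α (1 - x) n i
      = ∑ i ∈ range (n + 1), fracBinomTerm α x n i := by
    rw [← sum_range_reflect]
    exact sum_congr rfl fun i hi =>
      fracBinomTerm_reflect α x (mem_range_succ_iff.1 hi)
  rw [fracW_eq_div hα, fracW_eq_div hα, hsum, fracBinomTerm_reflect α x hj]

lemma log_fracBinomTerm (hα : 0 < α) (hx0 : 0 < x) (hx1 : x < 1) (hj : j ≤ n) :
    log (fracBinomTerm α x n j) =
      log (Gamma (α * n + 1)) - log (Gamma (α * j + 1)) - log (Gamma (α * (n - j) + 1))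
        + α * j * log x + α * (n - j) * log (1 - x) := by
  have hjn : (j : ℝ) ≤ n := Nat.cast_le.2 hj
  have h1 : 0 < Gamma (α * n + 1) := Gamma_pos_of_pos (by positivity)
  have h2 : 0 < Gamma (α * j + 1) := Gamma_pos_of_pos (by positivity)
  have h3 : 0 < Gamma (α * (n - j) + 1) := Gamma_pos_of_pos (by nlinarith)
  have h1x : 0 < 1 - x := by linarith
  unfold fracBinomTerm gbinom
  rw [show α * n - α * j + 1 = α * (n - j) + 1 by ring,
    log_mul (by positivity) (rpow_pos_of_pos h1x _).ne',
    log_mul (by positivity) (rpow_pos_of_pos hx0 _).ne', log_div h1.ne' (by positivity),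
    log_mul h2.ne' h3.ne', log_rpow hx0, log_rpow h1x]
  ring

end FracBinomTerm

section Decay

variable {α x : ℝ} {n k : ℕ}

lemma fracBinomTerm_succ_le (hα : 0 < α) (hx0 : 0 ≤ x) (hx1 : x < 1) (hk : 1 ≤ k)
    (hkn : k + 1 ≤ n) :
    fracBinomTerm α x n (k + 1)
      ≤ (x * (α * (n - k) + 1) / ((1 - x) * (α * k))) ^ α * fracBinomTerm α x n k := by
  have hkn' : (k : ℝ) + 1 ≤ n := by exact_mod_cast hkn
  rcases hx0.eq_or_lt with rfl | hx0
  · have : (0 : ℝ) ^ (α * ((k : ℝ) + 1)) = 0 := zero_rpow (by positivity)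
    simp [fracBinomTerm, this, zero_rpow hα.ne']
  have h1x : 0 < 1 - x := by linarith
  have hαk : 0 < α * k := by positivity
  have hnk : 0 < α * (n - k) + 1 := by nlinarith
  have hΓk : log (Gamma (α * k + 1)) + α * log (α * k) ≤ log (Gamma (α * (k + 1 : ℕ) + 1)) := by
    convert log_Gamma_add_one_add_ge (y := α * k) (c := α) (by positivity) hα using 3
    push_cast; ring
  have hΓnk : log (Gamma (α * (n - k) + 1))
      ≤ log (Gamma (α * (n - (k + 1 : ℕ)) + 1)) + α * log (α * (n - k) + 1) := by
    have hshift : α * (n - (k + 1 : ℕ)) + 1 + α = α * (n - k) + 1 := by push_cast; ring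
    simpa only [hshift] using
      log_Gamma_add_le (b := α * (n - (k + 1 : ℕ)) + 1) (a := α) (by push_cast; nlinarith) hα
  have hlogρ : log (x * (α * (n - k) + 1) / ((1 - x) * (α * k)))
      = log x + log (α * (n - k) + 1) - log (1 - x) - log (α * k) := by
    rw [log_div (by positivity) (by positivity), log_mul hx0.ne' hnk.ne',
      log_mul h1x.ne' hαk.ne']
    ring
  have hρ : 0 < x * (α * (n - k) + 1) / ((1 - x) * (α * k)) := by positivity
  have hpos_k := fracBinomTerm_pos hα hx0 hx1 (by omega : k ≤ n)
  rw [← log_le_log_iff (fracBinomTerm_pos hα hx0 hx1 hkn) (by positivity),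
    log_mul (rpow_pos_of_pos hρ _).ne' hpos_k.ne', log_rpow hρ, hlogρ,
    log_fracBinomTerm hα hx0 hx1 hkn, log_fracBinomTerm hα hx0 hx1 (by omega)]
  push_cast at hΓk hΓnk ⊢
  linarith

lemma fracBinomTerm_succ_le_of_add_le {α₀ δ : ℝ} (hα₀ : 0 < α₀) (hα : α₀ ≤ α) (hx0 : 0 ≤ x)
    (hδ : 0 < δ) (hαnδ : 2 ≤ α₀ * n * δ) (hk : n * (x + δ) ≤ k) (hkn : k + 1 ≤ n) :
    fracBinomTerm α x n (k + 1) ≤ (1 - δ) ^ α₀ * fracBinomTerm α x n k := by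
  have hα0 : 0 < α := hα₀.trans_le hα
  have hkn' : (k : ℝ) + 1 ≤ n := by exact_mod_cast hkn
  have hn : (0 : ℝ) < n := by linarith [k.cast_nonneg (α := ℝ)]
  have hk0 : (0 : ℝ) < k := by nlinarith
  have hδx : x + δ < 1 := by nlinarith
  have hαnδ' : 2 ≤ α * n * δ := by nlinarith
  have h1x : 0 < 1 - x := by linarith
  have hρ0 : 0 ≤ x * (α * (n - k) + 1) / ((1 - x) * (α * k)) := by
    have : 0 ≤ α * (n - k) + 1 := by nlinarith
    positivity
  -- `(1-δ)(1-x)αk - x(α(n-k)+1) = α(k-nx) - δ(1-x)αk - x ≥ αnδ - δ(1-x)αn - x = x(αnδ-1)`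
  have hρ : x * (α * (n - k) + 1) / ((1 - x) * (α * k)) ≤ 1 - δ := by
    rw [div_le_iff₀ (by positivity)]
    have : δ * (1 - x) * α * k ≤ δ * (1 - x) * α * n :=
      mul_le_mul_of_nonneg_left (by linarith) (by nlinarith)
    nlinarith [mul_le_mul_of_nonneg_left hk hα0.le,
      mul_nonneg hx0 (by linarith : 0 ≤ α * n * δ - 1)]
  calc fracBinomTerm α x n (k + 1)
      ≤ (x * (α * (n - k) + 1) / ((1 - x) * (α * k))) ^ α * fracBinomTerm α x n k :=
        fracBinomTerm_succ_le hα0 hx0 (by linarith) (by exact_mod_cast hk0) hkn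
    _ ≤ (1 - δ) ^ α₀ * fracBinomTerm α x n k := by
        refine mul_le_mul_of_nonneg_right ?_ (fracBinomTerm_nonneg hα0 hx0 (by linarith) (by omega))
        calc (x * (α * (n - k) + 1) / ((1 - x) * (α * k))) ^ α ≤ (1 - δ) ^ α :=
            rpow_le_rpow hρ0 hρ hα0.le
          _ ≤ (1 - δ) ^ α₀ := rpow_le_rpow_of_exponent_ge (by linarith) (by linarith) hα

end Decay

section Tail

variable {α x : ℝ} {n j : ℕ}

lemma fracW_le_of_add_le {α₀ ε : ℝ} (hα₀ : 0 < α₀) (hα : α₀ ≤ α) (hx0 : 0 ≤ x) (hε : 0 < ε)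
    (hαnε : 4 ≤ α₀ * n * ε) (hnε : 4 ≤ n * ε) (hj : j ≤ n) (hxj : n * (x + ε) ≤ j) :
    fracW α x n j ≤ ((1 - ε / 2) ^ (α₀ * ε / 4)) ^ n := by
  have hα0 : 0 < α := hα₀.trans_le hα
  have hjn : (j : ℝ) ≤ n := by exact_mod_cast hj
  have hn : (0 : ℝ) < n := by nlinarith
  have hxε : x + ε ≤ 1 := by nlinarith
  set p := ⌈n * (x + ε / 2)⌉₊
  have hp : n * (x + ε / 2) ≤ p := Nat.le_ceil _
  have hp' : (p : ℝ) < n * (x + ε / 2) + 1 := Nat.ceil_lt_add_one (by positivity)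
  have hpj : p ≤ j := by exact_mod_cast (by linarith : (p : ℝ) ≤ j)
  have hjp : n * ε / 4 ≤ ((j - p : ℕ) : ℝ) := by rw [Nat.cast_sub hpj]; linarith
  set r := (1 - ε / 2) ^ α₀
  have hr0 : 0 < r := rpow_pos_of_pos (by linarith) _
  have hr1 : r ≤ 1 := rpow_le_one (by linarith) (by linarith) hα₀.le
  have hgeom : fracBinomTerm α x n j ≤ r ^ (j - p) * fracBinomTerm α x n p := by
    have := le_geom (u := fun i => fracBinomTerm α x n (p + i)) hr0.le (j - p) fun i hi =>
      fracBinomTerm_succ_le_of_add_le (k := p + i) hα₀ hα hx0 (half_pos hε) (by linarith)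
        (hp.trans (by exact_mod_cast Nat.le_add_right p i)) (by omega)
    simpa [Nat.add_sub_cancel' hpj] using this
  set S := ∑ i ∈ range (n + 1), fracBinomTerm α x n i
  have hS : fracBinomTerm α x n p ≤ S :=
    single_le_sum (fun i hi => fracBinomTerm_nonneg hα0 hx0 (by linarith)
      (mem_range_succ_iff.1 hi)) (mem_range.2 (by omega))
  have hS0 : 0 ≤ S := (fracBinomTerm_nonneg hα0 hx0 (by linarith) (hpj.trans hj)).trans hS
  calc fracW α x n j = fracBinomTerm α x n j / S := fracW_eq_div hα0.ne'
    _ ≤ r ^ (j - p) * (fracBinomTerm α x n p / S) := by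
        rw [mul_div_assoc']
        exact div_le_div_of_nonneg_right hgeom hS0
    _ ≤ r ^ (j - p) := mul_le_of_le_one_right (pow_nonneg hr0.le _) (div_le_one_of_le₀ hS hS0)
    _ = r ^ ((j - p : ℕ) : ℝ) := (rpow_natCast r _).symm
    _ ≤ r ^ (n * ε / 4) := rpow_le_rpow_of_exponent_ge hr0 hr1 hjp
    _ = ((1 - ε / 2) ^ (α₀ * ε / 4)) ^ n := by
        rw [← rpow_natCast, ← rpow_mul (by linarith), ← rpow_mul (by linarith)]
        ring_nf

lemma fracW_le_of_le_abs {α₀ ε : ℝ} (hα₀ : 0 < α₀) (hα : α₀ ≤ α) (hx0 : 0 ≤ x) (hx1 : x ≤ 1)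
    (hε : 0 < ε) (hαnε : 4 ≤ α₀ * n * ε) (hnε : 4 ≤ n * ε) (hj : j ≤ n)
    (hxj : ε ≤ |(j : ℝ) / n - x|) :
    fracW α x n j ≤ ((1 - ε / 2) ^ (α₀ * ε / 4)) ^ n := by
  have hn : (0 : ℝ) < n := by nlinarith
  rcases le_abs'.1 hxj with hlow | hup
  · have := (div_le_iff₀ hn).1 (by linarith : (j : ℝ) / n ≤ x - ε)
    rw [← fracW_reflect α x hj]
    refine fracW_le_of_add_le hα₀ hα (by linarith) hε hαnε hnε (Nat.sub_le n j) ?_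
    rw [Nat.cast_sub hj]
    linarith
  · have := (le_div_iff₀ hn).1 (by linarith : x + ε ≤ (j : ℝ) / n)
    exact fracW_le_of_add_le hα₀ hα hx0 hε hαnε hnε hj (by linarith)

lemma sum_fracW_far_le {α₀ ε e : ℝ} (hα₀ : 0 < α₀) (hα : α₀ ≤ α) (hx0 : 0 ≤ x) (hx1 : x ≤ 1)
    (he : 0 < e) (he2 : e ≤ 2) (heε : e ≤ ε) (hαne : 4 ≤ α₀ * n * e) (hne : 4 ≤ n * e) :
    ∑ j ∈ range (n + 1), (if ε ≤ |(j : ℝ) / n - x| then fracW α x n j else 0)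
      ≤ (n + 1) * ((1 - e / 2) ^ (α₀ * e / 4)) ^ n := by
  have hs : 0 ≤ ((1 - e / 2) ^ (α₀ * e / 4)) ^ n := pow_nonneg (rpow_nonneg (by linarith) _) _
  calc _ ≤ ∑ _j ∈ range (n + 1), ((1 - e / 2) ^ (α₀ * e / 4)) ^ n := by
        refine sum_le_sum fun j hj => ?_
        split_ifs with hfar
        · exact fracW_le_of_le_abs hα₀ hα hx0 hx1 he hαne hne
            (mem_range_succ_iff.1 hj) (heε.trans hfar)
        · exact hs
    _ = (n + 1) * ((1 - e / 2) ^ (α₀ * e / 4)) ^ n := by simp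

end Tail

lemma IsCompact.exists_pos_forall_le {K : Set ℝ} (hK : IsCompact K) (hK' : K ⊆ Set.Ioi 0) :
    ∃ a > 0, ∀ x ∈ K, a ≤ x := by
  rcases K.eq_empty_or_nonempty with rfl | hne
  · exact ⟨1, one_pos, by simp⟩
  · exact ⟨sInf K, hK' (hK.sInf_mem hne), fun x hx => csInf_le hK.bddBelow hx⟩

lemma tendsto_succ_mul_pow_atTop_nhds_zero {s : ℝ} (hs0 : 0 ≤ s) (hs1 : s < 1) :
    Tendsto (fun n : ℕ => ((n : ℝ) + 1) * s ^ n) atTop (nhds 0) := by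
  simpa [add_mul] using (tendsto_self_mul_const_pow_of_lt_one hs0 hs1).add
    (tendsto_pow_atTop_nhds_zero_of_lt_one hs0 hs1)

/-- Weak law of large numbers for the fractional binomial distributions, uniformly
over a compact set of `α`'s in `(0,∞)` and over `x ∈ [0,1]`. -/
theorem fracBinom_wlln (K : Set ℝ) (hK : IsCompact K) (hK' : K ⊆ Set.Ioi (0 : ℝ))
    (ε : ℝ) (hε : 0 < ε) :
    Filter.Tendsto (fun n : ℕ =>
      ⨆ α : K, ⨆ x : Set.Icc (0 : ℝ) 1,
        ∑ j ∈ Finset.range (n + 1),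
          if ε ≤ |(j : ℝ) / (n : ℝ) - (x : ℝ)| then fracW (α : ℝ) (x : ℝ) n j else 0)
      Filter.atTop (nhds 0) := by
  obtain ⟨α₀, hα₀, hα₀K⟩ := hK.exists_pos_forall_le hK'
  set e := min ε 1
  have he : 0 < e := lt_min hε one_pos
  have he1 : e ≤ 1 := min_le_right ε 1
  set s := (1 - e / 2) ^ (α₀ * e / 4)
  have hs0 : 0 ≤ s := rpow_nonneg (by linarith) _
  have hs1 : s < 1 := rpow_lt_one (by linarith) (by linarith) (by positivity)
  have hlarge : ∀ᶠ n : ℕ in atTop, 4 ≤ α₀ * n * e ∧ 4 ≤ n * e :=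
    ((tendsto_natCast_atTop_atTop.const_mul_atTop hα₀).atTop_mul_const he
      |>.eventually_ge_atTop 4).and
      (tendsto_natCast_atTop_atTop.atTop_mul_const he |>.eventually_ge_atTop 4)
  refine squeeze_zero' (Eventually.of_forall fun n => ?_) (hlarge.mono fun n hn => ?_)
    (tendsto_succ_mul_pow_atTop_nhds_zero hs0 hs1)
  · refine Real.iSup_nonneg fun α => Real.iSup_nonneg fun x => sum_nonneg fun j hj => ?_
    split_ifs
    · exact fracW_nonneg (hK' α.2) x.2.1 x.2.2 (mem_range_succ_iff.1 hj)
    · exact le_rfl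
  · have hbound : 0 ≤ ((n : ℝ) + 1) * s ^ n := by positivity
    exact Real.iSup_le (fun α => Real.iSup_le (fun x => sum_fracW_far_le hα₀ (hα₀K α α.2)
      x.2.1 x.2.2 he (by linarith) (min_le_left ε 1) hn.1 hn.2) hbound) hbound
end

section
/- For all real numbers a ≥ 0, b ≥ 0, and θ ∈ ℝ, one has |a − b·e^{iθ}| ≥ √(a² + b²)·|sin(θ/2)|. -/
/-! Squaring both sides, the law of cosines gives `|a − b e^{iθ}|² = a² + b² − 2ab cos θ`, while
`sin²(θ/2) = (1 − cos θ)/2`. The difference of the two squares is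
`(a² + b²)(1 + cos θ)/2 − 2ab cos θ`, which is `≥ ab(1 − cos θ) ≥ 0` when `cos θ ≥ 0` (by AM-GM)
and a sum of nonnegative terms when `cos θ < 0`; both cases use `ab ≥ 0`. -/

open Real

theorem Complex.sq_norm_ofReal_sub_ofReal_mul_exp (a b θ : ℝ) :
    ‖(a : ℂ) - (b : ℂ) * Complex.exp ((θ : ℂ) * Complex.I)‖ ^ 2 =
      a ^ 2 + b ^ 2 - 2 * a * b * Real.cos θ := by
  rw [Complex.sq_norm, Complex.normSq_apply, Complex.exp_mul_I]
  simp only [← Complex.ofReal_cos, ← Complex.ofReal_sin, Complex.sub_re, Complex.sub_im,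
    Complex.mul_re, Complex.mul_im, Complex.add_re, Complex.add_im, Complex.ofReal_re,
    Complex.ofReal_im, Complex.I_re, Complex.I_im]
  linear_combination b ^ 2 * Real.sin_sq_add_cos_sq θ

theorem sq_add_sq_mul_one_sub_div_two_le {a b c : ℝ} (hab : 0 ≤ a * b)
    (hc₁ : -1 ≤ c) (hc₂ : c ≤ 1) :
    (a ^ 2 + b ^ 2) * ((1 - c) / 2) ≤ a ^ 2 + b ^ 2 - 2 * a * b * c := by
  rcases le_total 0 c with hc | hc
  · nlinarith [mul_nonneg hab (sub_nonneg.2 hc₂), mul_nonneg (sq_nonneg (a - b)) hc]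
  · nlinarith [mul_nonneg (add_nonneg (sq_nonneg a) (sq_nonneg b)) (neg_le_iff_add_nonneg.1 hc₁),
      mul_nonneg hab (neg_nonneg.2 hc)]

/-- For `a, b ≥ 0` and `θ ∈ ℝ`, `|a − b e^{iθ}| ≥ √(a² + b²) · |sin(θ/2)|`. -/
theorem abs_sub_mul_exp_ge (a b θ : ℝ) (ha : 0 ≤ a) (hb : 0 ≤ b) :
    Real.sqrt (a ^ 2 + b ^ 2) * |Real.sin (θ / 2)| ≤
      ‖(a : ℂ) - (b : ℂ) * Complex.exp ((θ : ℂ) * Complex.I)‖ := by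
  have hsin : sin (θ / 2) ^ 2 = (1 - cos θ) / 2 := by
    rw [sin_sq_eq_half_sub, mul_div_cancel₀ θ two_ne_zero]; ring
  refine (pow_le_pow_iff_left₀ (by positivity) (norm_nonneg _) two_ne_zero).1 ?_
  rw [mul_pow, sq_sqrt (by positivity), sq_abs, hsin, Complex.sq_norm_ofReal_sub_ofReal_mul_exp]
  exact sq_add_sq_mul_one_sub_div_two_le (mul_nonneg ha hb) (neg_one_le_cos θ) (cos_le_one θ)
end
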